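/- Let N, d ∈ ℕ and let G₁, …, G_d be N×N complex matrices such that each matrix 2·G_k satisfies the row condition: every row of 2·G_k either has exactly one non-zero entry and that entry lies in S₁, or has exactly two non-zero entries and both lie in S₂. Let U = G_d · G_{d−1} ⋯ G₁. Then for every pair of indices (r, s) there exist integers a, b, c, e with 2^d · U(r, s) = a + b·i + c·√2 + e·i·√2 and a² + b² + 2c² + 2e² ≤ 8^d (i.e. ‖2^d·U(r,s)‖ ≤ 2^{1.5·d}). -/

import Mathlib

/-!
Measure `a + b i + c √2 + e i √2 ∈ ℤ[i, √2]` by `a² + b² + 2c² + 2e²`. By the parallelogram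
law the measure of `x + y` is at most twice the sum of the measures of `x` and `y`, and
multiplying by `p + q i + u √2 + v i √2` with `p u + q v = 0` multiplies the measure by exactly
`p² + q² + 2u² + 2v²`, which is `4` on `S1` and `2` on `S2`. So each row of `2 G_k` multiplies the
bound on the entries by at most `max 4 (2·2 + 2·2) = 8`, and induction over the product gives `8^d`.
-/

noncomputable def S1 : Set ℂ :=
  {2, -2, 2 * Complex.I, -(2 * Complex.I),
   (Real.sqrt 2 : ℂ) + Complex.I * (Real.sqrt 2 : ℂ),
   (Real.sqrt 2 : ℂ) - Complex.I * (Real.sqrt 2 : ℂ),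
   -(Real.sqrt 2 : ℂ) + Complex.I * (Real.sqrt 2 : ℂ),
   -(Real.sqrt 2 : ℂ) - Complex.I * (Real.sqrt 2 : ℂ)}

noncomputable def S2 : Set ℂ :=
  {(Real.sqrt 2 : ℂ), -(Real.sqrt 2 : ℂ),
   Complex.I * (Real.sqrt 2 : ℂ), -(Complex.I * (Real.sqrt 2 : ℂ)),
   1 + Complex.I, 1 - Complex.I}

/-- Every row has exactly one non-zero entry lying in `S1`, or exactly two
non-zero entries both lying in `S2`. -/
def RowCond {n : Type*} (M : Matrix n n ℂ) : Prop :=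
  ∀ r, (∃ j₀, M r j₀ ≠ 0 ∧ M r j₀ ∈ S1 ∧ ∀ j, j ≠ j₀ → M r j = 0) ∨
       (∃ j₁ j₂, j₁ ≠ j₂ ∧ M r j₁ ≠ 0 ∧ M r j₂ ≠ 0 ∧
          M r j₁ ∈ S2 ∧ M r j₂ ∈ S2 ∧ ∀ j, j ≠ j₁ → j ≠ j₂ → M r j = 0)

open Complex

noncomputable def ofCoeffs (a b c e : ℤ) : ℂ :=
  a + b * I + c * (√2 : ℝ) + e * I * (√2 : ℝ)

lemma ofCoeffs_add (a b c e a' b' c' e' : ℤ) :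
    ofCoeffs a b c e + ofCoeffs a' b' c' e' = ofCoeffs (a + a') (b + b') (c + c') (e + e') := by
  simp only [ofCoeffs]
  push_cast
  ring

lemma ofCoeffs_mul (p q u v a b c e : ℤ) :
    ofCoeffs p q u v * ofCoeffs a b c e =
      ofCoeffs (p * a - q * b + 2 * u * c - 2 * v * e) (p * b + q * a + 2 * u * e + 2 * v * c)
        (p * c + u * a - q * e - v * b) (p * e + v * a + q * c + u * b) := by
  have hsqrt : ((√2 : ℝ) : ℂ) * (√2 : ℝ) = 2 := by
    rw [← ofReal_mul, Real.mul_self_sqrt zero_le_two, ofReal_ofNat]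
  simp only [ofCoeffs]
  push_cast
  linear_combination
    ((q * b : ℂ) + ((q : ℂ) * e + v * b) * (√2 : ℝ) + (v : ℂ) * e * ((√2 : ℝ) * (√2 : ℝ)))
        * I_mul_I
      + ((u : ℂ) * c - v * e + ((u : ℂ) * e + v * c) * I) * hsqrt

def NormSqLE (B : ℤ) (z : ℂ) : Prop :=
  ∃ a b c e : ℤ, z = ofCoeffs a b c e ∧ a ^ 2 + b ^ 2 + 2 * c ^ 2 + 2 * e ^ 2 ≤ B

namespace NormSqLE

lemma nonneg {B : ℤ} {z : ℂ} (h : NormSqLE B z) : 0 ≤ B := by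
  obtain ⟨a, b, c, e, -, hB⟩ := h
  exact le_trans (by positivity) hB

lemma mono {B B' : ℤ} (hBB' : B ≤ B') {z : ℂ} (h : NormSqLE B z) : NormSqLE B' z := by
  obtain ⟨a, b, c, e, hz, hB⟩ := h
  exact ⟨a, b, c, e, hz, hB.trans hBB'⟩

lemma zero : NormSqLE 0 0 :=
  ⟨0, 0, 0, 0, by simp [ofCoeffs], by norm_num⟩

lemma one : NormSqLE 1 1 :=
  ⟨1, 0, 0, 0, by simp [ofCoeffs], by norm_num⟩

lemma add {B₁ B₂ : ℤ} {x y : ℂ} (hx : NormSqLE B₁ x) (hy : NormSqLE B₂ y) :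
    NormSqLE (2 * B₁ + 2 * B₂) (x + y) := by
  obtain ⟨a, b, c, e, rfl, hB₁⟩ := hx
  obtain ⟨a', b', c', e', rfl, hB₂⟩ := hy
  refine ⟨_, _, _, _, ofCoeffs_add .., ?_⟩
  nlinarith [sq_nonneg (a - a'), sq_nonneg (b - b'), sq_nonneg (c - c'), sq_nonneg (e - e')]

end NormSqLE

/-- Multiplication by `m` scales `a² + b² + 2c² + 2e²` exactly by `K`. -/
def ScalesNormSq (K : ℤ) (m : ℂ) : Prop :=
  ∃ p q u v : ℤ, m = ofCoeffs p q u v ∧ p * u + q * v = 0 ∧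
    p ^ 2 + q ^ 2 + 2 * u ^ 2 + 2 * v ^ 2 = K

lemma NormSqLE.mul_left {K B : ℤ} {m z : ℂ} (hm : ScalesNormSq K m) (hz : NormSqLE B z) :
    NormSqLE (K * B) (m * z) := by
  obtain ⟨p, q, u, v, rfl, horth, rfl⟩ := hm
  obtain ⟨a, b, c, e, rfl, hB⟩ := hz
  refine ⟨_, _, _, _, ofCoeffs_mul .., ?_⟩
  -- the cross terms of the product form are `4 (p u + q v) (a c + b e)`
  have hmul : (p * a - q * b + 2 * u * c - 2 * v * e) ^ 2
      + (p * b + q * a + 2 * u * e + 2 * v * c) ^ 2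
      + 2 * (p * c + u * a - q * e - v * b) ^ 2 + 2 * (p * e + v * a + q * c + u * b) ^ 2
      = (p ^ 2 + q ^ 2 + 2 * u ^ 2 + 2 * v ^ 2) * (a ^ 2 + b ^ 2 + 2 * c ^ 2 + 2 * e ^ 2) := by
    linear_combination (8 * a * c + 8 * b * e) * horth
  rw [hmul]
  exact mul_le_mul_of_nonneg_left hB (by positivity)

lemma scalesNormSq_of_mem_S1 {m : ℂ} (hm : m ∈ S1) : ScalesNormSq 4 m := by
  simp only [S1, Set.mem_insert_iff, Set.mem_singleton_iff] at hm
  rcases hm with rfl | rfl | rfl | rfl | rfl | rfl | rfl | rfl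
  · exact ⟨2, 0, 0, 0, by push_cast [ofCoeffs]; ring, by norm_num, by norm_num⟩
  · exact ⟨-2, 0, 0, 0, by push_cast [ofCoeffs]; ring, by norm_num, by norm_num⟩
  · exact ⟨0, 2, 0, 0, by push_cast [ofCoeffs]; ring, by norm_num, by norm_num⟩
  · exact ⟨0, -2, 0, 0, by push_cast [ofCoeffs]; ring, by norm_num, by norm_num⟩
  · exact ⟨0, 0, 1, 1, by push_cast [ofCoeffs]; ring, by norm_num, by norm_num⟩
  · exact ⟨0, 0, 1, -1, by push_cast [ofCoeffs]; ring, by norm_num, by norm_num⟩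
  · exact ⟨0, 0, -1, 1, by push_cast [ofCoeffs]; ring, by norm_num, by norm_num⟩
  · exact ⟨0, 0, -1, -1, by push_cast [ofCoeffs]; ring, by norm_num, by norm_num⟩

lemma scalesNormSq_of_mem_S2 {m : ℂ} (hm : m ∈ S2) : ScalesNormSq 2 m := by
  simp only [S2, Set.mem_insert_iff, Set.mem_singleton_iff] at hm
  rcases hm with rfl | rfl | rfl | rfl | rfl | rfl
  · exact ⟨0, 0, 1, 0, by push_cast [ofCoeffs]; ring, by norm_num, by norm_num⟩
  · exact ⟨0, 0, -1, 0, by push_cast [ofCoeffs]; ring, by norm_num, by norm_num⟩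
  · exact ⟨0, 0, 0, 1, by push_cast [ofCoeffs]; ring, by norm_num, by norm_num⟩
  · exact ⟨0, 0, 0, -1, by push_cast [ofCoeffs]; ring, by norm_num, by norm_num⟩
  · exact ⟨1, 1, 0, 0, by push_cast [ofCoeffs]; ring, by norm_num, by norm_num⟩
  · exact ⟨1, -1, 0, 0, by push_cast [ofCoeffs]; ring, by norm_num, by norm_num⟩

lemma RowCond.normSqLE_mul_apply {n : Type*} [Fintype n] {A P : Matrix n n ℂ} {B : ℤ}
    (hA : RowCond A) (hP : ∀ i j, NormSqLE B (P i j)) (i j : n) :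
    NormSqLE (8 * B) ((A * P) i j) := by
  have hB : 0 ≤ B := (hP i j).nonneg
  rw [Matrix.mul_apply]
  rcases hA i with ⟨k, -, hk, hzero⟩ | ⟨k₁, k₂, hne, -, -, hk₁, hk₂, hzero⟩
  · rw [Fintype.sum_eq_single k fun l hl => by rw [hzero l hl, zero_mul]]
    exact ((hP k j).mul_left (scalesNormSq_of_mem_S1 hk)).mono (by linarith)
  · rw [Fintype.sum_eq_add k₁ k₂ hne fun l hl => by rw [hzero l hl.1 hl.2, zero_mul]]
    exact (((hP k₁ j).mul_left (scalesNormSq_of_mem_S2 hk₁)).add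
      ((hP k₂ j).mul_left (scalesNormSq_of_mem_S2 hk₂))).mono (by linarith)

lemma normSqLE_list_prod_apply {n : Type*} [Fintype n] [DecidableEq n]
    (L : List (Matrix n n ℂ)) (hL : ∀ A ∈ L, RowCond A) (i j : n) :
    NormSqLE (8 ^ L.length) (L.prod i j) := by
  induction L generalizing i j with
  | nil =>
    rw [List.prod_nil, Matrix.one_apply]
    split_ifs
    exacts [NormSqLE.one, NormSqLE.zero.mono zero_le_one]
  | cons A L ih =>
    rw [List.prod_cons, List.length_cons, pow_succ']
    exact (hL A List.mem_cons_self).normSqLE_mul_apply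
      (ih fun A' hA' => hL A' (List.mem_cons_of_mem _ hA')) i j

theorem entries_norm_bound (N d : ℕ)
    (G : Fin d → Matrix (Fin N) (Fin N) ℂ)
    (hG : ∀ k, RowCond ((2 : ℂ) • G k)) :
    ∀ r s, ∃ a b c e : ℤ,
      (2 : ℂ) ^ d * ((List.ofFn G).reverse.prod) r s =
        (a : ℂ) + (b : ℂ) * Complex.I + (c : ℂ) * (Real.sqrt 2 : ℂ) +
          (e : ℂ) * Complex.I * (Real.sqrt 2 : ℂ) ∧
      a ^ 2 + b ^ 2 + 2 * c ^ 2 + 2 * e ^ 2 ≤ 8 ^ d := by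
  intro r s
  set L := (List.ofFn G).reverse
  have hlen : L.length = d := by simp [L]
  have hscaled : ∀ A ∈ L.map ((2 : ℂ) • ·), RowCond A := by
    simp only [L, List.mem_map, List.mem_reverse, List.mem_ofFn]
    rintro _ ⟨_, ⟨k, rfl⟩, rfl⟩
    exact hG k
  have h := normSqLE_list_prod_apply _ hscaled r s
  rw [← List.smul_prod, List.length_map, hlen, Matrix.smul_apply, smul_eq_mul] at h
  exact h
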